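/- Let 0 ≤ ρ₁ < ρ₂ < 1, Y ∈ (0,1), and λ ∈ [0,1), and suppose the two models have the same average: λ/(1−λ) = (1−Y)·ρ₁/(1−ρ₁) + Y·ρ₂/(1−ρ₂), with λ > 0. Then there exists n ≥ 1 such that λ^n > (1−Y)·ρ₁^n + Y·ρ₂^n. (A Bernoulli model with the same average overestimates the probability of some short runs, since both tails sum to the same value while the Markov tail eventually dominates.) -/

import Mathlib

/-!
Suppose, to the contrary, that `λ^n ≤ μ_n` for every `n ≥ 1`. The inequality is strict at `n = 2`:
from `λ ≤ μ_1 = (1-Y)ρ₁ + Yρ₂` and strict convexity of `x ↦ x²` we get `λ² ≤ μ_1² < μ_2`.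
Summing over `n ≥ 1` then gives `λ/(1-λ) < m`, contradicting the equality of the averages.
-/

lemma hasSum_pow_succ_of_abs_lt_one {r : ℝ} (hr : |r| < 1) :
    HasSum (fun n : ℕ => r ^ (n + 1)) (r / (1 - r)) := by
  simpa only [pow_succ', div_eq_mul_inv] using (hasSum_geometric_of_abs_lt_one hr).mul_left r

lemma hasSum_mixture_pow_succ {ρ₁ ρ₂ : ℝ} (Y : ℝ) (h₁ : |ρ₁| < 1) (h₂ : |ρ₂| < 1) :
    HasSum (fun n : ℕ => (1 - Y) * ρ₁ ^ (n + 1) + Y * ρ₂ ^ (n + 1))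
      ((1 - Y) * (ρ₁ / (1 - ρ₁)) + Y * (ρ₂ / (1 - ρ₂))) :=
  ((hasSum_pow_succ_of_abs_lt_one h₁).mul_left _).add
    ((hasSum_pow_succ_of_abs_lt_one h₂).mul_left _)

lemma sq_lt_mixture_sq_of_le_mixture {ρ₁ ρ₂ Y lam : ℝ} (hρ : ρ₁ ≠ ρ₂) (hY : 0 < Y)
    (hY' : Y < 1) (hl : 0 ≤ lam) (hle : lam ≤ (1 - Y) * ρ₁ + Y * ρ₂) :
    lam ^ 2 < (1 - Y) * ρ₁ ^ 2 + Y * ρ₂ ^ 2 :=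
  calc lam ^ 2 ≤ ((1 - Y) * ρ₁ + Y * ρ₂) ^ 2 := pow_le_pow_left₀ hl hle 2
    _ < (1 - Y) * ρ₁ ^ 2 + Y * ρ₂ ^ 2 :=
      (Even.strictConvexOn_pow even_two two_ne_zero).2 trivial trivial hρ
        (sub_pos.2 hY') hY (sub_add_cancel 1 Y)

/-- If the Bernoulli model with scoring probability `λ > 0` has the same average
as the two-type Markov model with eigenvalues `0 ≤ ρ₁ < ρ₂ < 1` and weight
`Y ∈ (0,1)`, then for some `n ≥ 1` the Bernoulli model overestimates the
probability of a run of length `n`: `λ^n > (1-Y)ρ₁^n + Yρ₂^n`. -/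
theorem bernoulli_overestimates_some_short_run (ρ₁ ρ₂ Y lam : ℝ)
    (h₁ : 0 ≤ ρ₁) (h₁₂ : ρ₁ < ρ₂) (h₂ : ρ₂ < 1)
    (hY : 0 < Y) (hY' : Y < 1) (hl : 0 < lam) (hl' : lam < 1)
    (havg : lam / (1 - lam)
      = (1 - Y) * (ρ₁ / (1 - ρ₁)) + Y * (ρ₂ / (1 - ρ₂))) :
    ∃ n : ℕ, 1 ≤ n ∧ (1 - Y) * ρ₁ ^ n + Y * ρ₂ ^ n < lam ^ n := by
  by_contra! hcon
  have hle : ∀ n : ℕ, lam ^ (n + 1) ≤ (1 - Y) * ρ₁ ^ (n + 1) + Y * ρ₂ ^ (n + 1) :=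
    fun n => hcon (n + 1) n.succ_pos
  have hlt_two : lam ^ 2 < (1 - Y) * ρ₁ ^ 2 + Y * ρ₂ ^ 2 :=
    sq_lt_mixture_sq_of_le_mixture h₁₂.ne hY hY' hl.le (by simpa using hle 0)
  have habs : ∀ {r : ℝ}, 0 ≤ r → r < 1 → |r| < 1 := fun h0 h1 => abs_lt.2 ⟨by linarith, h1⟩
  have hsum_lt := hasSum_lt (i := 1) hle hlt_two
    (hasSum_pow_succ_of_abs_lt_one (habs hl.le hl'))
    (hasSum_mixture_pow_succ Y (habs h₁ (h₁₂.trans h₂)) (habs (h₁.trans h₁₂.le) h₂))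
  exact hsum_lt.ne havg
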